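/- arXiv:1711.01829 — 6 statements merged into one kernel-verified Lean document; each statement's English description precedes it below -/
import Mathlib

section
/- (Heaviside's integral formula) For every positive integer k, ∫_0^∞ K_0(t)·t^{k-1} dt = 2^{k-2}·[Γ(k/2)]^2, where Γ is Euler's gamma function. -/
open MeasureTheory Real

/-- Modified Bessel function of the first kind, order zero. -/
noncomputable def I0 (t : ℝ) : ℝ := (1/π) * ∫ θ in (0:ℝ)..π, Real.exp (t * Real.cos θ)

/-- Modified Bessel function of the second kind, order zero. -/
noncomputable def K0 (t : ℝ) : ℝ := ∫ u in Set.Ioi (0:ℝ), Real.exp (-t * Real.cosh u)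

/-- Modified Bessel function of the first kind, order one: `I₁ = I₀'`. -/
noncomputable def I1 (t : ℝ) : ℝ := deriv I0 t

/-- Modified Bessel function of the second kind, order one: `K₁ = -K₀'`. -/
noncomputable def K1 (t : ℝ) : ℝ := -deriv K0 t

/-!
Writing `K₀` as an integral and applying Fubini, the `t`-integral is a Gamma integral:
`∫₀^∞ e^{-t cosh u} t^n dt = n! sech^{n+1} u`. The Gudermannian substitution `θ = arctan (sinh u)`
turns `∫₀^∞ sech^{n+1} u du` into the Wallis integral `∫₀^{π/2} cos^n θ dθ`, and
`n! ∫₀^{π/2} cos^n = 2^{n-1} Γ((n+1)/2)²` follows from the reduction formula by two-step induction.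
-/

open Set

lemma integral_exp_neg_mul_mul_pow {a : ℝ} (ha : 0 < a) (n : ℕ) :
    ∫ t in Ioi (0:ℝ), exp (-t * a) * t ^ n = Gamma (n + 1) * a⁻¹ ^ (n + 1) := by
  have h := integral_rpow_mul_exp_neg_mul_Ioi (a := (n:ℝ) + 1) (by positivity) ha
  simp only [add_sub_cancel_right, rpow_natCast, one_div] at h
  rw [← rpow_natCast, Nat.cast_succ, mul_comm, ← h]
  refine setIntegral_congr_fun measurableSet_Ioi fun t _ => ?_
  ring_nf

lemma integrableOn_exp_neg_mul_mul_pow {a : ℝ} (ha : 0 < a) (n : ℕ) :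
    IntegrableOn (fun t => exp (-t * a) * t ^ n) (Ioi 0) :=
  Integrable.of_integral_ne_zero (by rw [integral_exp_neg_mul_mul_pow ha]; positivity)

lemma gamma_mul_integral_cos_pow (n : ℕ) :
    Gamma (n + 1) * ∫ x in (0:ℝ)..π / 2, cos x ^ n = 2 ^ ((n:ℝ) - 1) * Gamma ((n + 1) / 2) ^ 2 := by
  induction n using Nat.twoStepInduction with
  | zero =>
    norm_num [Gamma_one_half_eq, rpow_neg_one, sq_sqrt pi_pos.le]
    ring
  | one => norm_num
  | more n ih _ =>
    have hΓ : Gamma ((n + 2 : ℕ) + 1) = (n + 2) * (n + 1) * Gamma (n + 1) := by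
      rw [show ((n + 2 : ℕ) : ℝ) + 1 = (n + 1 + 1) + 1 by push_cast; ring,
        Gamma_add_one (by positivity), Gamma_add_one (by positivity)]
      ring
    have hΓhalf : Gamma (((n + 2 : ℕ) + 1) / 2) = (n + 1) / 2 * Gamma ((n + 1) / 2) := by
      rw [show (((n + 2 : ℕ) : ℝ) + 1) / 2 = (n + 1) / 2 + 1 by push_cast; ring,
        Gamma_add_one (by positivity)]
    have hpow : (2:ℝ) ^ (((n + 2 : ℕ) : ℝ) - 1) = 4 * 2 ^ ((n:ℝ) - 1) := by
      rw [show ((n + 2 : ℕ) : ℝ) - 1 = ((n:ℝ) - 1) + 2 by push_cast; ring,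
        rpow_add two_pos, rpow_two]
      ring
    rw [integral_cos_pow, hΓ, hΓhalf, hpow]
    simp only [cos_pi_div_two, sin_zero, zero_pow n.succ_ne_zero, zero_mul, mul_zero, sub_zero,
      zero_div, zero_add]
    calc (n + 2) * (n + 1) * Gamma (n + 1) * ((n + 1) / (n + 2) * ∫ x in (0:ℝ)..π / 2, cos x ^ n)
        = (n + 1) ^ 2 * (Gamma (n + 1) * ∫ x in (0:ℝ)..π / 2, cos x ^ n) := by
          field_simp
      _ = _ := by rw [ih]; ring

noncomputable def gd (u : ℝ) : ℝ := arctan (sinh u)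

lemma hasDerivAt_gd (u : ℝ) : HasDerivAt gd (cosh u)⁻¹ u := by
  refine ((hasDerivAt_arctan (sinh u)).comp u (hasDerivAt_sinh u)).congr_deriv ?_
  have := cosh_pos u
  rw [← cosh_sq']
  field_simp

lemma cos_gd (u : ℝ) : cos (gd u) = (cosh u)⁻¹ := by
  rw [gd, cos_arctan, ← cosh_sq', sqrt_sq (cosh_pos u).le, one_div]

lemma gd_injective : Function.Injective gd :=
  arctan_injective.comp sinh_injective

lemma gd_image_Ioi : gd '' Ioi 0 = Ioo 0 (π / 2) := by
  ext θ
  constructor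
  · rintro ⟨u, hu, rfl⟩
    refine ⟨?_, arctan_lt_pi_div_two _⟩
    simpa only [gd, arctan_zero] using arctan_strictMono (sinh_pos_iff.2 hu)
  · rintro ⟨h0, hπ⟩
    refine ⟨arsinh (tan θ), ?_, ?_⟩
    · rw [mem_Ioi, ← arsinh_zero, arsinh_lt_arsinh]
      exact tan_pos_of_pos_of_lt_pi_div_two h0 hπ
    · rw [gd, sinh_arsinh, arctan_tan (by linarith [pi_pos]) hπ]

lemma integral_inv_cosh_pow_succ (n : ℕ) :
    ∫ u in Ioi (0:ℝ), (cosh u)⁻¹ ^ (n + 1) = ∫ x in (0:ℝ)..π / 2, cos x ^ n := by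
  have h := integral_image_eq_integral_abs_deriv_smul (measurableSet_Ioi (a := 0))
    (fun u _ => (hasDerivAt_gd u).hasDerivWithinAt) gd_injective.injOn (fun θ => cos θ ^ n)
  rw [gd_image_Ioi] at h
  rw [intervalIntegral.integral_of_le (by positivity), integral_Ioc_eq_integral_Ioo, h]
  refine setIntegral_congr_fun measurableSet_Ioi fun u _ => ?_
  rw [cos_gd, smul_eq_mul, abs_of_pos (inv_pos.2 (cosh_pos u)), pow_succ']

lemma integrableOn_inv_cosh_pow_succ (n : ℕ) :
    IntegrableOn (fun u => (cosh u)⁻¹ ^ (n + 1)) (Ioi 0) :=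
  Integrable.of_integral_ne_zero
    (by rw [integral_inv_cosh_pow_succ]; exact (EulerSine.integral_cos_pow_pos n).ne')

lemma integrable_exp_neg_mul_cosh_mul_pow (n : ℕ) :
    Integrable (Function.uncurry fun t u => exp (-t * cosh u) * t ^ n)
      ((volume.restrict (Ioi 0)).prod (volume.restrict (Ioi 0))) := by
  have hcont : Continuous (Function.uncurry fun t u => exp (-t * cosh u) * t ^ n) := by
    unfold Function.uncurry
    fun_prop
  rw [integrable_prod_iff' hcont.aestronglyMeasurable]
  refine ⟨.of_forall fun u => integrableOn_exp_neg_mul_mul_pow (cosh_pos u) n, ?_⟩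
  have hnorm (u : ℝ) : ∫ t in Ioi 0, ‖exp (-t * cosh u) * t ^ n‖
      = Gamma (n + 1) * (cosh u)⁻¹ ^ (n + 1) := by
    rw [← integral_exp_neg_mul_mul_pow (cosh_pos u)]
    refine setIntegral_congr_fun measurableSet_Ioi fun t ht => ?_
    exact norm_of_nonneg (by have := ht.out.le; positivity)
  simp only [Function.uncurry_apply_pair, hnorm]
  exact (integrableOn_inv_cosh_pow_succ n).const_mul _

lemma integral_K0_mul_pow (n : ℕ) :
    ∫ t in Ioi (0:ℝ), K0 t * t ^ n = Gamma (n + 1) * ∫ u in Ioi (0:ℝ), (cosh u)⁻¹ ^ (n + 1) := by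
  calc ∫ t in Ioi (0:ℝ), K0 t * t ^ n
      = ∫ t in Ioi (0:ℝ), ∫ u in Ioi (0:ℝ), exp (-t * cosh u) * t ^ n := by
        simp only [K0, integral_mul_const]
    _ = ∫ u in Ioi (0:ℝ), ∫ t in Ioi (0:ℝ), exp (-t * cosh u) * t ^ n :=
        integral_integral_swap (integrable_exp_neg_mul_cosh_mul_pow n)
    _ = ∫ u in Ioi (0:ℝ), Gamma (n + 1) * (cosh u)⁻¹ ^ (n + 1) := by
        simp only [integral_exp_neg_mul_mul_pow (cosh_pos _)]
    _ = _ := integral_const_mul _ _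

theorem heaviside_integral (k : ℕ) (hk : 0 < k) :
    ∫ t in Set.Ioi (0:ℝ), K0 t * t ^ (k - 1)
      = (2:ℝ) ^ ((k:ℝ) - 2) * (Real.Gamma ((k:ℝ)/2))^2 := by
  obtain ⟨n, rfl⟩ := Nat.exists_eq_add_one_of_ne_zero hk.ne'
  rw [Nat.add_sub_cancel, integral_K0_mul_pow, integral_inv_cosh_pow_succ,
    gamma_mul_integral_cos_pow]
  push_cast
  ring_nf
end

section
/- For all real u with 0 < u < 1 we have ∫_0^∞ I_0(√u·t)·K_0(t)·t dt = 1/(1-u), where I_0 and K_0 are the modified Bessel functions of zeroth order. -/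
open MeasureTheory Real

/-!
Write `b = √u`. Expanding `K₀ t = ∫₀^∞ e^{-t cosh v} dv` and swapping the (nonnegative)
integrals, the inner integral is the Laplace transform of `t I₀(b t)` at `a = cosh v`. Expanding
`I₀` as well and using `∫₀^∞ t e^{-(a - b cos θ) t} dt = (a - b cos θ)⁻²`, it equals
`π⁻¹ ∫₀^π (a - b cos θ)⁻² dθ = a / (a² - b²)^{3/2}`. Since `cosh² v - u = sinh² v + c` with
`c = 1 - u`, what remains is
`∫₀^∞ cosh v / (sinh² v + c)^{3/2} dv = [sinh v / (c √(sinh² v + c))]₀^∞ = 1 / c`.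
-/

open Set Filter Topology

lemma lintegral_Ioi_ofReal_of_hasDerivAt_of_nonneg {g g' : ℝ → ℝ} {a l : ℝ}
    (hderiv : ∀ x ∈ Ici a, HasDerivAt g (g' x) x) (g'pos : ∀ x ∈ Ioi a, 0 ≤ g' x)
    (hg : Tendsto g atTop (𝓝 l)) :
    ∫⁻ x in Ioi a, ENNReal.ofReal (g' x) = ENNReal.ofReal (l - g a) := by
  rw [← ofReal_integral_eq_lintegral_ofReal (integrableOn_Ioi_deriv_of_nonneg' hderiv g'pos hg)
    ((ae_restrict_mem measurableSet_Ioi).mono g'pos),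
    integral_Ioi_of_hasDerivAt_of_nonneg' hderiv g'pos hg]

lemma lintegral_Ioi_mul_exp_neg_mul {a : ℝ} (ha : 0 < a) :
    ∫⁻ t in Ioi 0, ENNReal.ofReal (t * exp (-t * a)) = ENNReal.ofReal (a ^ 2)⁻¹ := by
  have hderiv (t : ℝ) :
      HasDerivAt (fun t => -(t / a + 1 / a ^ 2) * exp (-t * a)) (t * exp (-t * a)) t := by
    refine ((((hasDerivAt_id t).div_const a).add_const (1 / a ^ 2)).neg.mul
      (((hasDerivAt_neg t).mul_const a).exp)).congr_deriv ?_
    simp only [Pi.neg_apply, id]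
    field_simp
    ring
  have hlim : Tendsto (fun t => -(t / a + 1 / a ^ 2) * exp (-t * a)) atTop (𝓝 0) := by
    have h1 : Tendsto (fun t => t * exp (-t * a)) atTop (𝓝 0) := by
      simpa [mul_comm] using tendsto_rpow_mul_exp_neg_mul_atTop_nhds_zero 1 a ha
    have h2 : Tendsto (fun t => exp (-t * a)) atTop (𝓝 0) :=
      tendsto_exp_atBot.comp (tendsto_neg_atTop_atBot.atBot_mul_const ha)
    have := ((h1.div_const a).add (h2.div_const (a ^ 2))).neg
    rw [zero_div, zero_div, add_zero, neg_zero] at this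
    exact this.congr fun t => by ring
  convert lintegral_Ioi_ofReal_of_hasDerivAt_of_nonneg (fun t _ => hderiv t)
    (fun t ht => mul_nonneg (le_of_lt ht) (exp_pos _).le) hlim using 2
  simp

lemma sub_mul_cos_pos {a b : ℝ} (hab : |b| < a) (θ : ℝ) : 0 < a - b * cos θ := by
  have : b * cos θ ≤ |b| := by
    calc b * cos θ ≤ |b * cos θ| := le_abs_self _
      _ = |b| * |cos θ| := abs_mul _ _
      _ ≤ |b| := mul_le_of_le_one_right (abs_nonneg _) (abs_cos_le_one θ)
  linarith

section CosineIntegrals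

variable {a b : ℝ}

lemma hasDerivAt_sin_div_sub_mul_cos (hab : |b| < a) (θ : ℝ) :
    HasDerivAt (fun θ => sin θ / (a - b * cos θ)) ((a * cos θ - b) / (a - b * cos θ) ^ 2) θ := by
  refine ((hasDerivAt_sin θ).div (((hasDerivAt_cos θ).const_mul b).const_sub a)
    (sub_mul_cos_pos hab θ).ne').congr_deriv ?_
  congr 1
  linear_combination (-b) * sin_sq_add_cos_sq θ

/-- The half-angle substitution, in a form whose antiderivative stays continuous through `θ = π`. -/
lemma hasDerivAt_add_two_mul_arctan (hab : |b| < a) (θ : ℝ) :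
    HasDerivAt (fun θ => θ + 2 * arctan (b * sin θ / (a + √(a ^ 2 - b ^ 2) - b * cos θ)))
      (√(a ^ 2 - b ^ 2) / (a - b * cos θ)) θ := by
  set s := √(a ^ 2 - b ^ 2)
  have hb2 : b ^ 2 < a ^ 2 := sq_lt_sq' (neg_lt_of_abs_lt hab) (lt_of_abs_lt hab)
  have hs2 : s ^ 2 = a ^ 2 - b ^ 2 := sq_sqrt (by linarith)
  have hs : 0 ≤ s := sqrt_nonneg _
  have hA := sub_mul_cos_pos hab θ
  have hE : 0 < a + s - b * cos θ := by linarith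
  have hpyth := sin_sq_add_cos_sq θ
  have hq : HasDerivAt (fun θ => b * sin θ / (a + s - b * cos θ))
      ((b * cos θ * (a + s - b * cos θ) - b * sin θ * (b * sin θ)) / (a + s - b * cos θ) ^ 2) θ :=
    ((hasDerivAt_sin θ).const_mul b).div
      (((hasDerivAt_cos θ).const_mul b).const_sub (a + s)) hE.ne' |>.congr_deriv (by ring)
  refine ((hasDerivAt_id θ).add ((hasDerivAt_arctan _).comp θ hq |>.const_mul 2)).congr_deriv ?_
  have hsum : (a + s - b * cos θ) ^ 2 + (b * sin θ) ^ 2 = 2 * (a + s) * (a - b * cos θ) := by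
    linear_combination b ^ 2 * hpyth + hs2
  have has : 0 < a + s := by linarith [abs_nonneg b]
  field_simp
  linear_combination (a - b * cos θ - s) * hsum - 2 * b ^ 2 * (a - b * cos θ) * hpyth
    - 2 * (a - b * cos θ) * hs2

lemma integral_inv_sub_mul_cos_sq (hab : |b| < a) :
    ∫ θ in (0)..π, ((a - b * cos θ) ^ 2)⁻¹ = π * a / √(a ^ 2 - b ^ 2) ^ 3 := by
  set s := √(a ^ 2 - b ^ 2) with hs_def
  have hb2 : b ^ 2 < a ^ 2 := sq_lt_sq' (neg_lt_of_abs_lt hab) (lt_of_abs_lt hab)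
  have hs2 : s ^ 2 = a ^ 2 - b ^ 2 := sq_sqrt (by linarith)
  have hs : 0 < s := sqrt_pos.2 (by linarith)
  have hF (θ : ℝ) : HasDerivAt (fun θ => (b * (sin θ / (a - b * cos θ)) +
      a * ((θ + 2 * arctan (b * sin θ / (a + s - b * cos θ))) / s)) / (a ^ 2 - b ^ 2))
      ((a - b * cos θ) ^ 2)⁻¹ θ := by
    refine ((((hasDerivAt_sin_div_sub_mul_cos hab θ).const_mul b).add
      (((hasDerivAt_add_two_mul_arctan hab θ).div_const s).const_mul a)).div_const _).congr_deriv ?_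
    have hA := sub_mul_cos_pos hab θ
    rw [← hs_def]
    field_simp
    rw [div_eq_iff (by linarith)]
    ring
  have hcont : Continuous fun θ => ((a - b * cos θ) ^ 2)⁻¹ :=
    by fun_prop (disch := exact fun θ => pow_ne_zero 2 (sub_mul_cos_pos hab θ).ne')
  rw [intervalIntegral.integral_eq_sub_of_hasDerivAt (fun θ _ => hF θ) (hcont.intervalIntegrable _ _)]
  simp only [sin_pi, cos_pi, mul_neg, mul_one, sub_neg_eq_add, zero_div, mul_zero, arctan_zero,
    add_zero, zero_add, sin_zero, cos_zero, sub_zero]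
  rw [← hs2]
  field_simp

end CosineIntegrals

lemma tendsto_sinh_atTop : Tendsto sinh atTop atTop :=
  tendsto_atTop_mono' atTop ((eventually_ge_atTop 0).mono fun _ hx => self_le_sinh_iff.2 hx)
    tendsto_id

lemma tendsto_div_sqrt_sq_add_atTop (c : ℝ) :
    Tendsto (fun x => x / √(x ^ 2 + c)) atTop (𝓝 1) := by
  have hlim : Tendsto (fun x => (√(1 + c / x ^ 2))⁻¹) atTop (𝓝 1) := by
    have := (((tendsto_const_nhds (x := c)).div_atTop
      (tendsto_pow_atTop (α := ℝ) two_ne_zero)).const_add 1).sqrt.inv₀ (by simp)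
    simpa using this
  refine hlim.congr' ((eventually_gt_atTop 0).mono fun x hx => ?_)
  dsimp only
  rw [show x ^ 2 + c = x ^ 2 * (1 + c / x ^ 2) by field_simp, sqrt_mul (sq_nonneg x),
    sqrt_sq hx.le, div_mul_cancel_left₀ hx.ne']

lemma hasDerivAt_div_sqrt_sq_add {c : ℝ} (hc : 0 < c) (x : ℝ) :
    HasDerivAt (fun x => x / √(x ^ 2 + c)) (c / √(x ^ 2 + c) ^ 3) x := by
  have hpos : 0 < x ^ 2 + c := by positivity
  have hs : 0 < √(x ^ 2 + c) := sqrt_pos.2 hpos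
  refine ((hasDerivAt_id x).div ((((hasDerivAt_id x).pow 2).add_const c).sqrt hpos.ne')
    hs.ne').congr_deriv ?_
  have hs2 : √(x ^ 2 + c) ^ 2 = x ^ 2 + c := sq_sqrt hpos.le
  simp only [Pi.pow_apply, id]
  field_simp
  linear_combination 2 * hs2

lemma lintegral_cosh_div_sqrt_sinh_sq_add {c : ℝ} (hc : 0 < c) :
    ∫⁻ v in Ioi 0, ENNReal.ofReal (cosh v / √(sinh v ^ 2 + c) ^ 3) = ENNReal.ofReal c⁻¹ := by
  have hderiv (v : ℝ) : HasDerivAt (fun v => sinh v / √(sinh v ^ 2 + c) / c)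
      (cosh v / √(sinh v ^ 2 + c) ^ 3) v :=
    (((hasDerivAt_div_sqrt_sq_add hc (sinh v)).comp v (hasDerivAt_sinh v)).div_const c).congr_deriv
      (by field_simp)
  have hlim : Tendsto (fun v => sinh v / √(sinh v ^ 2 + c) / c) atTop (𝓝 c⁻¹) := by
    simpa using ((tendsto_div_sqrt_sq_add_atTop c).comp tendsto_sinh_atTop).div_const c
  rw [lintegral_Ioi_ofReal_of_hasDerivAt_of_nonneg (fun v _ => hderiv v)
    (fun v _ => by have := cosh_pos v; positivity) hlim]
  simp

lemma I0_eq_setIntegral (x : ℝ) : I0 x = ∫ θ in Ioc 0 π, π⁻¹ * exp (x * cos θ) := by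
  rw [I0, intervalIntegral.integral_of_le pi_pos.le, integral_const_mul, one_div]

lemma I0_nonneg (x : ℝ) : 0 ≤ I0 x := by
  rw [I0_eq_setIntegral]
  exact setIntegral_nonneg measurableSet_Ioc fun θ _ => by positivity

@[fun_prop]
lemma continuous_I0 : Continuous I0 := by
  unfold I0
  fun_prop

lemma ofReal_I0 (x : ℝ) :
    ENNReal.ofReal (I0 x) = ∫⁻ θ in Ioc 0 π, ENNReal.ofReal (π⁻¹ * exp (x * cos θ)) := by
  rw [I0_eq_setIntegral]
  exact ofReal_integral_eq_lintegral_ofReal (by fun_prop : Continuous _).integrableOn_Ioc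
    (ae_of_all _ fun θ => by positivity)

lemma integrableOn_exp_neg_mul_cosh {t : ℝ} (ht : 0 < t) :
    IntegrableOn (fun v => exp (-t * cosh v)) (Ioi 0) := by
  refine (exp_neg_integrableOn_Ioi 0 ht).mono' (by fun_prop : Continuous _).aestronglyMeasurable ?_
  filter_upwards [ae_restrict_mem measurableSet_Ioi] with v hv
  rw [norm_of_nonneg (exp_pos _).le, exp_le_exp, neg_mul, neg_mul, neg_le_neg_iff]
  have : v ≤ cosh v := (self_le_sinh_iff.2 (le_of_lt hv)).trans (sinh_lt_cosh v).le
  gcongr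

lemma ofReal_K0 {t : ℝ} (ht : 0 < t) :
    ENNReal.ofReal (K0 t) = ∫⁻ v in Ioi 0, ENNReal.ofReal (exp (-t * cosh v)) :=
  ofReal_integral_eq_lintegral_ofReal (integrableOn_exp_neg_mul_cosh ht)
    (ae_of_all _ fun _ => (exp_pos _).le)

lemma K0_nonneg (t : ℝ) : 0 ≤ K0 t :=
  setIntegral_nonneg measurableSet_Ioi fun _ _ => (exp_pos _).le

@[fun_prop]
lemma measurable_K0 : Measurable K0 :=
  (by fun_prop : Continuous fun p : ℝ × ℝ => exp (-p.1 * cosh p.2)).stronglyMeasurable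
    |>.integral_prod_right' |>.measurable

lemma lintegral_I0_mul_mul_exp_neg {a b : ℝ} (hab : |b| < a) :
    ∫⁻ t in Ioi 0, ENNReal.ofReal (I0 (b * t) * t * exp (-t * a)) =
      ENNReal.ofReal (a / √(a ^ 2 - b ^ 2) ^ 3) := by
  have hπ : 0 ≤ π⁻¹ := inv_nonneg.2 pi_pos.le
  calc _ = ∫⁻ t in Ioi 0, ∫⁻ θ in Ioc 0 π,
        ENNReal.ofReal (π⁻¹ * (t * exp (-t * (a - b * cos θ)))) := by
        refine lintegral_congr fun t => ?_
        rw [mul_assoc, ENNReal.ofReal_mul (I0_nonneg _), ofReal_I0,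
          ← lintegral_mul_const' _ _ ENNReal.ofReal_ne_top]
        refine lintegral_congr fun θ => ?_
        rw [← ENNReal.ofReal_mul (by positivity),
          show -t * (a - b * cos θ) = b * t * cos θ + -t * a by ring, exp_add]
        congr 1
        ring
    _ = ∫⁻ θ in Ioc 0 π, ∫⁻ t in Ioi 0,
        ENNReal.ofReal (π⁻¹ * (t * exp (-t * (a - b * cos θ)))) :=
      lintegral_lintegral_swap (by fun_prop)
    _ = ∫⁻ θ in Ioc 0 π, ENNReal.ofReal (π⁻¹ * ((a - b * cos θ) ^ 2)⁻¹) := by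
        refine setLIntegral_congr_fun measurableSet_Ioc fun θ _ => ?_
        simp_rw [ENNReal.ofReal_mul hπ]
        rw [lintegral_const_mul' _ _ ENNReal.ofReal_ne_top,
          lintegral_Ioi_mul_exp_neg_mul (sub_mul_cos_pos hab θ)]
    _ = ENNReal.ofReal (∫ θ in (0)..π, π⁻¹ * ((a - b * cos θ) ^ 2)⁻¹) := by
        have hcont : Continuous fun θ => π⁻¹ * ((a - b * cos θ) ^ 2)⁻¹ :=
          by fun_prop (disch := exact fun θ => pow_ne_zero 2 (sub_mul_cos_pos hab θ).ne')
        rw [intervalIntegral.integral_of_le pi_pos.le, ofReal_integral_eq_lintegral_ofReal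
          hcont.integrableOn_Ioc (ae_of_all _ fun θ => by positivity)]
    _ = ENNReal.ofReal (a / √(a ^ 2 - b ^ 2) ^ 3) := by
        rw [intervalIntegral.integral_const_mul, integral_inv_sub_mul_cos_sq hab]
        field_simp

theorem weber_schafheitlin_I0K0 (u : ℝ) (hu0 : 0 < u) (hu1 : u < 1) :
    ∫ t in Set.Ioi (0:ℝ), I0 (Real.sqrt u * t) * K0 t * t = 1 / (1 - u) := by
  set b := √u
  have hb2 : b ^ 2 = u := sq_sqrt hu0.le
  have hb : ∀ v, |b| < cosh v := fun v => by
    rw [abs_of_nonneg (sqrt_nonneg u)]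
    exact ((sqrt_lt_sqrt hu0.le hu1).trans_eq sqrt_one).trans_le (one_le_cosh v)
  have hnonneg : 0 ≤ᵐ[volume.restrict (Ioi 0)] fun t => I0 (b * t) * K0 t * t :=
    (ae_restrict_mem measurableSet_Ioi).mono fun t ht =>
      mul_nonneg (mul_nonneg (I0_nonneg _) (K0_nonneg _)) (le_of_lt ht)
  rw [integral_eq_lintegral_of_nonneg_ae hnonneg (by fun_prop : Measurable _).aestronglyMeasurable,
    one_div, ← ENNReal.toReal_ofReal (inv_nonneg.2 (sub_nonneg.2 hu1.le))]
  congr 1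
  calc ∫⁻ t in Ioi 0, ENNReal.ofReal (I0 (b * t) * K0 t * t)
      = ∫⁻ t in Ioi 0, ∫⁻ v in Ioi 0, ENNReal.ofReal (I0 (b * t) * t * exp (-t * cosh v)) := by
        refine setLIntegral_congr_fun measurableSet_Ioi fun t ht => ?_
        rw [mul_right_comm, ENNReal.ofReal_mul (mul_nonneg (I0_nonneg _) (le_of_lt ht)), ofReal_K0 ht,
          ← lintegral_const_mul' _ _ ENNReal.ofReal_ne_top]
        simp_rw [← ENNReal.ofReal_mul (mul_nonneg (I0_nonneg _) (le_of_lt ht))]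
    _ = ∫⁻ v in Ioi 0, ∫⁻ t in Ioi 0, ENNReal.ofReal (I0 (b * t) * t * exp (-t * cosh v)) :=
        lintegral_lintegral_swap (by fun_prop)
    _ = ∫⁻ v in Ioi 0, ENNReal.ofReal (cosh v / √(sinh v ^ 2 + (1 - u)) ^ 3) :=
        lintegral_congr fun v => by
          rw [lintegral_I0_mul_mul_exp_neg (hb v), cosh_sq, hb2, add_sub_assoc]
    _ = ENNReal.ofReal (1 - u)⁻¹ := lintegral_cosh_div_sqrt_sinh_sq_add (sub_pos.2 hu1)
end

section
/- For all real u with 0 < u < 1 we have ∫_0^∞ I_1(√u·t)·K_0(t) dt = -log(1-u)/(2√u), where I_1 = I_0' is the modified Bessel function of the first kind of order one. -/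
open MeasureTheory Real

/-!
Differentiating the integral defining `I₀` gives `I₁ s = π⁻¹ ∫_{(0,π]} cos θ · e^{s cos θ} dθ`, so
`|I₁ s| ≤ e^{|s|}`, and the integral becomes a triple integral in `t`, `v` and `θ`. Integrating in
`t` first gives the Laplace transform
`∫₀^∞ I₁(a t) e^{-c t} dt = π⁻¹ ∫₀^π cos θ / (c - a cos θ) dθ = (c / √(c² - a²) - 1) / a`
for `|a| < c`, which we use at `c = cosh v`. As `cosh² v - a² = sinh² v + (1 - a²)`, the remaining
integrand `cosh v / √(sinh² v + b) - 1` has the primitive `log (sinh v + √(sinh² v + b)) - v`,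
which tends to `0` at infinity and equals `(log b) / 2` at `0`.
-/

open Filter Topology Set ProbabilityTheory

lemma mul_cos_le_abs (a θ : ℝ) : a * cos θ ≤ |a| :=
  (le_abs_self _).trans <| by
    simpa [abs_mul] using mul_le_of_le_one_right (abs_nonneg a) (abs_cos_le_one θ)

lemma I1_eq_integral (s : ℝ) :
    I1 s = π⁻¹ * ∫ θ in Ioc 0 π, cos θ * exp (s * cos θ) := by
  have hI0 : I0 = fun t ↦ π⁻¹ * mgf cos (volume.restrict (Ioc 0 π)) t := by
    ext t
    rw [I0, intervalIntegral.integral_of_le pi_pos.le, one_div, mgf]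
  have hexp : integrableExpSet cos (volume.restrict (Ioc 0 π)) = univ :=
    eq_univ_of_forall fun t ↦ (by fun_prop : Continuous fun θ ↦ exp (t * cos θ)).integrableOn_Ioc
  rw [I1, hI0]
  exact ((hasDerivAt_mgf (by simp [hexp])).const_mul π⁻¹).deriv

lemma measurable_I1 : Measurable I1 := measurable_deriv I0

lemma abs_I1_le (s : ℝ) : |I1 s| ≤ exp |s| := by
  have hbound : ∀ θ ∈ Ioc 0 π, ‖cos θ * exp (s * cos θ)‖ ≤ exp |s| := fun θ _ ↦ by
    rw [norm_mul, norm_of_nonneg (exp_pos _).le, norm_eq_abs]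
    simpa using mul_le_mul (abs_cos_le_one θ) (exp_le_exp.2 (mul_cos_le_abs s θ)) (exp_pos _).le
      zero_le_one
  have hint := norm_setIntegral_le_of_norm_le_const (μ := volume) measure_Ioc_lt_top hbound
  rw [volume_real_Ioc_of_le pi_pos.le, sub_zero, norm_eq_abs] at hint
  rw [I1_eq_integral, abs_mul, abs_inv, abs_of_pos pi_pos]
  calc π⁻¹ * |(∫ θ in Ioc 0 π, cos θ * exp (s * cos θ))| ≤ π⁻¹ * (exp |s| * π) := by gcongr
    _ = exp |s| := by field_simp

lemma continuous_inv_sub_mul_cos {a c : ℝ} (h : |a| < c) :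
    Continuous fun θ ↦ (c - a * cos θ)⁻¹ :=
  Continuous.inv₀ (f := fun θ ↦ c - a * cos θ) (by fun_prop)
    fun θ ↦ by linarith [mul_cos_le_abs a θ]

lemma integral_inv_sub_mul_cos {a c : ℝ} (h : |a| < c) :
    ∫ θ in (0)..π, (c - a * cos θ)⁻¹ = π / √(c ^ 2 - a ^ 2) := by
  set D := √(c ^ 2 - a ^ 2)
  have hpos : 0 < c ^ 2 - a ^ 2 := by nlinarith [abs_nonneg a, sq_abs a]
  have hD2 : D ^ 2 = c ^ 2 - a ^ 2 := sq_sqrt hpos.le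
  have hD : 0 < D := sqrt_pos.2 hpos
  have hden : ∀ θ, 0 < c - a * cos θ := fun θ ↦ by linarith [mul_cos_le_abs a θ]
  have hM : ∀ θ, 0 < c + D - a * cos θ := fun θ ↦ by linarith [hden θ]
  -- a primitive that is smooth on all of ℝ, unlike the one from the substitution `tan (θ / 2)`
  have hderiv : ∀ θ, HasDerivAt (fun θ ↦ (θ + 2 * arctan (a * sin θ / (c + D - a * cos θ))) / D)
      (c - a * cos θ)⁻¹ θ := fun θ ↦ by
    have hs : HasDerivAt (fun θ ↦ a * sin θ / (c + D - a * cos θ))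
        ((a * cos θ * (c + D - a * cos θ) - a * sin θ * (a * sin θ)) / (c + D - a * cos θ) ^ 2) θ := by
      refine (((hasDerivAt_sin θ).const_mul a).div
        (((hasDerivAt_cos θ).const_mul a).const_sub (c + D)) (hM θ).ne').congr_deriv ?_
      ring
    have hq : HasDerivAt (fun θ ↦ arctan (a * sin θ / (c + D - a * cos θ)))
        ((D / (c - a * cos θ) - 1) / 2) θ := by
      refine hs.arctan.congr_deriv ?_
      have := hM θ
      have := hden θ
      field_simp
      linear_combination (-(D + c - a * cos θ)) * (hD2 + a ^ 2 * sin_sq_add_cos_sq θ)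
    refine (((hasDerivAt_id θ).add (hq.const_mul 2)).div_const D).congr_deriv ?_
    have := hden θ
    field_simp
    ring
  rw [intervalIntegral.integral_eq_sub_of_hasDerivAt (fun θ _ ↦ hderiv θ)
    ((continuous_inv_sub_mul_cos h).intervalIntegrable _ _)]
  simp

lemma sinh_add_sqrt_sinh_sq_add_pos {b : ℝ} (hb : 0 < b) (v : ℝ) :
    0 < sinh v + √(sinh v ^ 2 + b) := by
  have : |sinh v| < √(sinh v ^ 2 + b) := by
    rw [← sqrt_sq_eq_abs]
    exact sqrt_lt_sqrt (sq_nonneg _) (by linarith)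
  linarith [neg_abs_le (sinh v)]

lemma hasDerivAt_log_sinh_add_sqrt_sinh_sq_add {b : ℝ} (hb : 0 < b) (v : ℝ) :
    HasDerivAt (fun v ↦ log (sinh v + √(sinh v ^ 2 + b))) (cosh v / √(sinh v ^ 2 + b)) v := by
  have hsq : HasDerivAt (fun v ↦ sinh v ^ 2 + b) (2 * sinh v * cosh v) v :=
    (((hasDerivAt_sinh v).pow 2).add_const b).congr_deriv (by ring)
  have hsum : HasDerivAt (fun v ↦ sinh v + √(sinh v ^ 2 + b))
      (cosh v + 2 * sinh v * cosh v / (2 * √(sinh v ^ 2 + b))) v :=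
    (hasDerivAt_sinh v).add (hsq.sqrt (by positivity))
  refine (hsum.log (sinh_add_sqrt_sinh_sq_add_pos hb v).ne').congr_deriv ?_
  have := sinh_add_sqrt_sinh_sq_add_pos hb v
  field_simp
  ring

lemma tendsto_log_sinh_add_sqrt_sinh_sq_add_sub_self {b : ℝ} (hb : 0 < b) :
    Tendsto (fun v ↦ log (sinh v + √(sinh v ^ 2 + b)) - v) atTop (𝓝 0) := by
  set φ : ℝ → ℝ := fun y ↦ (1 - y ^ 2) / 2 + √(((1 - y ^ 2) / 2) ^ 2 + b * y ^ 2)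
  have hφ : ∀ v, φ (exp (-v)) = (sinh v + √(sinh v ^ 2 + b)) * exp (-v) := fun v ↦ by
    have hs : (1 - exp (-v) ^ 2) / 2 = sinh v * exp (-v) := by
      rw [sinh_eq, exp_neg]
      field_simp
    simp only [φ, hs]
    rw [show (sinh v * exp (-v)) ^ 2 + b * exp (-v) ^ 2 = (sinh v ^ 2 + b) * exp (-v) ^ 2 by ring,
      sqrt_mul (by positivity), sqrt_sq (exp_pos _).le]
    ring
  have hφ0 : φ 0 = 1 := by
    norm_num [φ, show (1 / 4 : ℝ) = (1 / 2) ^ 2 by norm_num]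
  have hlim : Tendsto (fun v ↦ φ (exp (-v))) atTop (𝓝 1) :=
    hφ0 ▸ ((by fun_prop : Continuous φ).tendsto 0).comp tendsto_exp_neg_atTop_nhds_zero
  refine (log_one ▸ hlim.log one_ne_zero).congr fun v ↦ ?_
  rw [hφ, log_mul (sinh_add_sqrt_sinh_sq_add_pos hb v).ne' (exp_pos _).ne', log_exp]
  ring

lemma integral_cosh_div_sqrt_sinh_sq_add_sub_one {b : ℝ} (hb : 0 < b) :
    ∫ v in Ioi 0, (cosh v / √(sinh v ^ 2 + b) - 1) = -log b / 2 := by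
  have hderiv : ∀ v ∈ Ici (0 : ℝ), HasDerivAt (fun v ↦ log (sinh v + √(sinh v ^ 2 + b)) - v)
      (cosh v / √(sinh v ^ 2 + b) - 1) v := fun v _ ↦
    (hasDerivAt_log_sinh_add_sqrt_sinh_sq_add hb v).sub (hasDerivAt_id v)
  have hlim := tendsto_log_sinh_add_sqrt_sinh_sq_add_sub_self hb
  have hr : ∀ v, 0 < √(sinh v ^ 2 + b) := fun v ↦ sqrt_pos.2 (by positivity)
  have hcosh : ∀ v, cosh v = √(sinh v ^ 2 + 1) := fun v ↦ by
    rw [← cosh_sq, sqrt_sq (cosh_pos v).le]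
  have hvalue : 0 - (log (sinh 0 + √(sinh 0 ^ 2 + b)) - 0) = -log b / 2 := by
    simp [log_sqrt hb.le, neg_div]
  -- a derivative of constant sign is integrable as soon as the primitive has a limit
  rcases le_total b 1 with hb1 | hb1
  · refine (integral_Ioi_of_hasDerivAt_of_nonneg' hderiv (fun v _ ↦ ?_) hlim).trans hvalue
    rw [sub_nonneg, one_le_div (hr v), hcosh]
    exact sqrt_le_sqrt (by linarith)
  · refine (integral_Ioi_of_hasDerivAt_of_nonpos' hderiv (fun v _ ↦ ?_) hlim).trans hvalue
    rw [sub_nonpos, div_le_one (hr v), hcosh]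
    exact sqrt_le_sqrt (by linarith)

lemma integral_cos_div_sub_mul_cos {a c : ℝ} (ha : a ≠ 0) (h : |a| < c) :
    ∫ θ in (0)..π, cos θ / (c - a * cos θ) = π * (c / √(c ^ 2 - a ^ 2) - 1) / a := by
  have hsplit : ∀ θ, cos θ / (c - a * cos θ) = (c * (c - a * cos θ)⁻¹ - 1) / a := fun θ ↦ by
    have : c - a * cos θ ≠ 0 := by linarith [mul_cos_le_abs a θ]
    rw [eq_div_iff ha, ← div_eq_mul_inv, div_sub_one this, div_mul_eq_mul_div]
    ring
  simp_rw [hsplit]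
  rw [intervalIntegral.integral_div, intervalIntegral.integral_sub
      (((continuous_inv_sub_mul_cos h).intervalIntegrable _ _).const_mul c) intervalIntegrable_const,
    intervalIntegral.integral_const_mul, integral_inv_sub_mul_cos h, intervalIntegral.integral_const,
    smul_eq_mul, sub_zero, mul_one]
  ring

lemma integrable_cos_mul_exp_sub_mul_prod {a c : ℝ} (h : |a| < c) :
    Integrable (fun p : ℝ × ℝ ↦ cos p.2 * exp ((a * cos p.2 - c) * p.1))
      ((volume.restrict (Ioi 0)).prod (volume.restrict (Ioc 0 π))) := by
  have hdom : Integrable (fun p : ℝ × ℝ ↦ exp ((|a| - c) * p.1) * 1)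
      ((volume.restrict (Ioi 0)).prod (volume.restrict (Ioc 0 π))) :=
    (integrableOn_exp_mul_Ioi (by linarith) 0).mul_prod (integrableOn_const measure_Ioc_lt_top.ne)
  refine hdom.mono' (by fun_prop) ?_
  rw [Measure.prod_restrict]
  filter_upwards [ae_restrict_mem (measurableSet_Ioi.prod measurableSet_Ioc)] with p hp
  have ht : 0 ≤ p.1 := le_of_lt hp.1
  rw [norm_mul, norm_of_nonneg (exp_pos _).le, norm_eq_abs, mul_comm]
  exact mul_le_mul (exp_le_exp.2 (by nlinarith [mul_cos_le_abs a p.2])) (abs_cos_le_one _)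
    (abs_nonneg _) (exp_pos _).le

lemma integral_I1_mul_exp_neg_mul {a c : ℝ} (ha : a ≠ 0) (h : |a| < c) :
    ∫ t in Ioi 0, I1 (a * t) * exp (-t * c) = (c / √(c ^ 2 - a ^ 2) - 1) / a := by
  have hI1 : ∀ t, I1 (a * t) * exp (-t * c)
      = π⁻¹ * ∫ θ in Ioc 0 π, cos θ * exp ((a * cos θ - c) * t) := fun t ↦ by
    rw [I1_eq_integral, mul_assoc, ← integral_mul_const]
    congr 2 with θ
    rw [mul_assoc, ← exp_add]
    ring_nf
  have hinner : ∀ θ, ∫ t in Ioi 0, cos θ * exp ((a * cos θ - c) * t) = cos θ / (c - a * cos θ) :=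
    fun θ ↦ by
      have hneg : a * cos θ - c < 0 := by linarith [mul_cos_le_abs a θ]
      rw [integral_const_mul, integral_exp_mul_Ioi hneg, mul_zero, exp_zero, neg_div,
        ← div_neg, neg_sub, mul_one_div]
  simp_rw [hI1]
  rw [integral_const_mul, integral_integral_swap (integrable_cos_mul_exp_sub_mul_prod h)]
  simp_rw [hinner]
  rw [← intervalIntegral.integral_of_le pi_pos.le, integral_cos_div_sub_mul_cos ha h]
  field_simp

lemma integrableOn_inv_cosh : IntegrableOn (fun v ↦ (cosh v)⁻¹) (Ioi 0) := by
  refine ((exp_neg_integrableOn_Ioi 0 one_pos).const_mul 2).mono' (by fun_prop) ?_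
  filter_upwards with v
  rw [norm_inv, norm_of_nonneg (cosh_pos v).le, neg_one_mul, exp_neg, ← div_eq_mul_inv,
    inv_eq_one_div, div_le_div_iff₀ (cosh_pos v) (exp_pos v), cosh_eq]
  linarith [exp_pos (-v)]

lemma integrable_exp_mul_cosh_prod {k : ℝ} (hk : k < 0) :
    Integrable (fun p : ℝ × ℝ ↦ exp (k * cosh p.2 * p.1))
      ((volume.restrict (Ioi 0)).prod (volume.restrict (Ioi 0))) := by
  have hk' : ∀ v, k * cosh v < 0 := fun v ↦ mul_neg_of_neg_of_pos hk (cosh_pos v)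
  refine (integrable_prod_iff' (by fun_prop)).2
    ⟨ae_of_all _ fun v ↦ integrableOn_exp_mul_Ioi (hk' v) 0, ?_⟩
  have hinner : ∀ v, ∫ t in Ioi 0, ‖exp (k * cosh v * t)‖ = -k⁻¹ * (cosh v)⁻¹ := fun v ↦ by
    simp_rw [norm_of_nonneg (exp_pos _).le]
    rw [integral_exp_mul_Ioi (hk' v), mul_zero, exp_zero, neg_div, one_div, mul_inv, neg_mul]
  simp_rw [hinner]
  exact integrableOn_inv_cosh.const_mul _

lemma integrable_I1_mul_exp_neg_mul_cosh_prod {a : ℝ} (ha : |a| < 1) :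
    Integrable (fun p : ℝ × ℝ ↦ I1 (a * p.1) * exp (-p.1 * cosh p.2))
      ((volume.restrict (Ioi 0)).prod (volume.restrict (Ioi 0))) := by
  refine (integrable_exp_mul_cosh_prod (sub_neg.2 ha)).mono'
    ((measurable_I1.comp (measurable_fst.const_mul a)).mul (by fun_prop)).aestronglyMeasurable ?_
  rw [Measure.prod_restrict]
  filter_upwards [ae_restrict_mem (measurableSet_Ioi.prod measurableSet_Ioi)] with p hp
  have ht : 0 ≤ p.1 := le_of_lt hp.1
  have hI1 : ‖I1 (a * p.1)‖ ≤ exp (|a| * p.1) := by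
    simpa [abs_mul, abs_of_nonneg ht] using abs_I1_le (a * p.1)
  rw [norm_mul, norm_of_nonneg (exp_pos _).le]
  calc ‖I1 (a * p.1)‖ * exp (-p.1 * cosh p.2) ≤ exp (|a| * p.1) * exp (-p.1 * cosh p.2) := by
        gcongr
    _ ≤ exp ((|a| - 1) * cosh p.2 * p.1) := by
        rw [← exp_add]
        gcongr
        nlinarith [one_le_cosh p.2, mul_nonneg (abs_nonneg a) ht]

theorem weber_schafheitlin_I1K0 (u : ℝ) (hu0 : 0 < u) (hu1 : u < 1) :
    ∫ t in Set.Ioi (0:ℝ), I1 (Real.sqrt u * t) * K0 t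
      = - Real.log (1 - u) / (2 * Real.sqrt u) := by
  set a := √u
  have ha0 : 0 < a := sqrt_pos.2 hu0
  have ha1 : |a| < 1 := by
    rw [abs_of_pos ha0, ← sqrt_one]
    exact sqrt_lt_sqrt hu0.le hu1
  have hinner : ∀ v, ∫ t in Ioi 0, I1 (a * t) * exp (-t * cosh v)
      = (cosh v / √(sinh v ^ 2 + (1 - a ^ 2)) - 1) / a := fun v ↦ by
    rw [integral_I1_mul_exp_neg_mul ha0.ne' (ha1.trans_le (one_le_cosh v)), cosh_sq,
      add_sub_assoc]
  calc ∫ t in Ioi 0, I1 (a * t) * K0 t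
      = ∫ t in Ioi 0, ∫ v in Ioi 0, I1 (a * t) * exp (-t * cosh v) := by
        simp_rw [K0, ← integral_const_mul]
    _ = ∫ v in Ioi 0, ∫ t in Ioi 0, I1 (a * t) * exp (-t * cosh v) :=
        integral_integral_swap (integrable_I1_mul_exp_neg_mul_cosh_prod ha1)
    _ = -log (1 - a ^ 2) / 2 / a := by
        simp_rw [hinner]
        rw [integral_div, integral_cosh_div_sqrt_sinh_sq_add_sub_one
          (sub_pos.2 ((sq_lt_one_iff_abs_lt_one a).2 ha1))]
    _ = -log (1 - u) / (2 * a) := by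
        rw [sq_sqrt hu0.le, div_div]
end

section
/- (Weber–Schafheitlin type asymptotics) Let n be a positive integer. Then as u → 1⁻, (1-u)^n · ∫_0^∞ I_0(√u·t)·K_0(t)·t^n dt tends to 2^{n-1}·(n-1)!. -/
open MeasureTheory Real

/-!
Both Bessel functions are Laplace integrals: `π e^{-x} I₀(x) = ∫_{(0,π]} e^{-x(1 - cos θ)} dθ`
and `e^{y} K₀(y) = ∫_{(0,∞)} e^{-y(cosh v - 1)} dv`. In each case the phase `φ` satisfies
`φ(θ) ≥ c θ²` and `φ(θ) ~ θ²/2` at `0`, so after `θ = w/√x` dominated convergence shows that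
`√x` times the integral is bounded and tends to `∫_0^∞ e^{-w²/2} dw = √(2π)/2`.

Put `a = √u` and substitute `t = s/(1 - a²)`. Since `a t - t = -s/(1 + a)`, the integrand becomes
`e^{-s/(1+a)} / (π√a) · A(a t) · B(t) · s^{n-1}` with `A, B` the two normalised Laplace integrals.
It converges to `e^{-s/2} s^{n-1} / 2` under the integrable bound `C e^{-s/2} s^{n-1}`, and
`∫_0^∞ e^{-s/2} s^{n-1} ds / 2 = 2^{n-1} (n-1)!`.
-/

open Filter Set Topology

lemma cosh_sub_one_eq (v : ℝ) : cosh v - 1 = 2 * sinh (v / 2) ^ 2 := by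
  have h := cosh_two_mul (v / 2)
  rw [mul_div_cancel₀ v two_ne_zero, cosh_sq] at h
  linarith

lemma one_sub_cos_eq (θ : ℝ) : 1 - cos θ = 2 * sin (θ / 2) ^ 2 := by
  have h := sin_sq_eq_half_sub (θ / 2)
  rw [mul_div_cancel₀ θ two_ne_zero] at h
  linarith

lemma half_mul_sq_le_cosh_sub_one (v : ℝ) : 1 / 2 * v ^ 2 ≤ cosh v - 1 := by
  have h : |v / 2| ≤ |sinh (v / 2)| := by
    rcases le_total 0 v with hv | hv
    · rw [abs_of_nonneg (by linarith), abs_of_nonneg (sinh_nonneg_iff.2 (by linarith))]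
      exact self_le_sinh_iff.2 (by linarith)
    · rw [← abs_neg, ← abs_neg (sinh _), ← sinh_neg, abs_of_nonneg (by linarith),
        abs_of_nonneg (sinh_nonneg_iff.2 (by linarith))]
      exact self_le_sinh_iff.2 (by linarith)
  have := sq_le_sq.2 h
  rw [cosh_sub_one_eq]
  linarith

lemma two_div_pi_sq_mul_sq_le_one_sub_cos {θ : ℝ} (hθ : θ ∈ Ioc 0 π) :
    2 / π ^ 2 * θ ^ 2 ≤ 1 - cos θ := by
  have := cos_le_one_sub_mul_cos_sq (abs_le.2 ⟨by linarith [hθ.1, pi_pos], hθ.2⟩)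
  linarith

lemma tendsto_two_mul_sq_half_div_sq {g : ℝ → ℝ} (hg : HasDerivAt g 1 0) (hg0 : g 0 = 0) :
    Tendsto (fun θ => 2 * g (θ / 2) ^ 2 / θ ^ 2) (𝓝[≠] 0) (𝓝 (1 / 2)) := by
  have hslope : Tendsto (fun h => g h / h) (𝓝[≠] 0) (𝓝 1) := by
    simpa [hasDerivAt_iff_tendsto_slope, slope_fun_def, hg0, div_eq_inv_mul] using hg
  have hhalf : Tendsto (fun θ : ℝ => θ / 2) (𝓝[≠] 0) (𝓝[≠] 0) :=
    tendsto_nhdsWithin_of_tendsto_nhds_of_eventually_within _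
      (((continuous_id.div_const (2 : ℝ)).tendsto' 0 0 (by simp)).mono_left nhdsWithin_le_nhds)
      (eventually_nhdsWithin_of_forall fun θ hθ => div_ne_zero hθ two_ne_zero)
  have := ((hslope.comp hhalf).pow 2).const_mul (1 / 2)
  rw [one_pow, mul_one] at this
  refine this.congr' (eventually_nhdsWithin_of_forall fun θ (hθ : θ ≠ 0) => ?_)
  simp only [Function.comp_apply]
  field_simp

lemma tendsto_one_sub_cos_div_sq :
    Tendsto (fun θ => (1 - cos θ) / θ ^ 2) (𝓝[≠] 0) (𝓝 (1 / 2)) := by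
  simpa only [one_sub_cos_eq] using
    tendsto_two_mul_sq_half_div_sq (by simpa using hasDerivAt_sin 0) sin_zero

lemma tendsto_cosh_sub_one_div_sq :
    Tendsto (fun v => (cosh v - 1) / v ^ 2) (𝓝[≠] 0) (𝓝 (1 / 2)) := by
  simpa only [cosh_sub_one_eq] using
    tendsto_two_mul_sq_half_div_sq (by simpa using hasDerivAt_sinh 0) sinh_zero

noncomputable def laplaceIntegral (φ : ℝ → ℝ) (S : Set ℝ) (x : ℝ) : ℝ :=
  ∫ θ in S, exp (-(x * φ θ))

section Laplace

variable {φ : ℝ → ℝ} {S : Set ℝ} {c x : ℝ}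

lemma measurable_laplaceIntegral (hφ : Measurable φ) (S : Set ℝ) :
    Measurable (laplaceIntegral φ S) :=
  (show StronglyMeasurable fun p : ℝ × ℝ => exp (-(p.1 * φ p.2)) from
    (by fun_prop : Measurable fun p : ℝ × ℝ => exp (-(p.1 * φ p.2))).stronglyMeasurable)
    |>.integral_prod_right' |>.measurable

lemma sqrt_mul_laplaceIntegral_eq (hS : MeasurableSet S) (hS0 : S ⊆ Ioi 0) (hx : 0 < x) :
    √x * laplaceIntegral φ S x
      = ∫ w in Ioi 0, S.indicator (fun θ => exp (-(x * φ θ))) (w / √x) := by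
  have hS' : laplaceIntegral φ S x = ∫ θ in Ioi 0, S.indicator (fun θ => exp (-(x * φ θ))) θ := by
    rw [integral_indicator hS, Measure.restrict_restrict hS, inter_eq_left.2 hS0, laplaceIntegral]
  have h := integral_comp_mul_left_Ioi (S.indicator fun θ => exp (-(x * φ θ))) 0
    (inv_pos.2 (sqrt_pos.2 hx))
  simp only [mul_zero, inv_inv, smul_eq_mul, ← div_eq_inv_mul] at h
  rw [hS', ← h]

lemma indicator_exp_neg_mul_le (hφ : ∀ θ ∈ S, c * θ ^ 2 ≤ φ θ) (hx : 0 < x) (w : ℝ) :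
    S.indicator (fun θ => exp (-(x * φ θ))) (w / √x) ≤ exp (-c * w ^ 2) := by
  by_cases hw : w / √x ∈ S
  · rw [indicator_of_mem hw, exp_le_exp, neg_mul, neg_le_neg_iff]
    calc c * w ^ 2 = x * (c * (w / √x) ^ 2) := by
          rw [div_pow, sq_sqrt hx.le]; field_simp
      _ ≤ x * φ (w / √x) := mul_le_mul_of_nonneg_left (hφ _ hw) hx.le
  · rw [indicator_of_notMem hw]
    exact (exp_pos _).le

lemma sqrt_mul_laplaceIntegral_le (hS : MeasurableSet S) (hS0 : S ⊆ Ioi 0) (hc : 0 < c)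
    (hφ : ∀ θ ∈ S, c * θ ^ 2 ≤ φ θ) (hx : 0 < x) :
    √x * laplaceIntegral φ S x ≤ √(π / c) / 2 := by
  rw [sqrt_mul_laplaceIntegral_eq hS hS0 hx, ← integral_gaussian_Ioi]
  exact integral_mono_of_nonneg
    (ae_of_all _ fun w => indicator_nonneg (fun _ _ => (exp_pos _).le) _)
    (integrable_exp_neg_mul_sq hc).integrableOn
    (ae_of_all _ (indicator_exp_neg_mul_le hφ hx))

lemma tendsto_div_sqrt_atTop_nhdsGT_zero {w : ℝ} (hw : 0 < w) :
    Tendsto (fun x => w / √x) atTop (𝓝[>] 0) :=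
  tendsto_nhdsWithin_iff.2 ⟨tendsto_const_nhds.div_atTop tendsto_sqrt_atTop,
    (eventually_gt_atTop 0).mono fun _ hx => div_pos hw (sqrt_pos.2 hx)⟩

lemma tendsto_indicator_exp_neg_mul (hS : S ∈ 𝓝[>] 0)
    (hlim : Tendsto (fun θ => φ θ / θ ^ 2) (𝓝[>] 0) (𝓝 (1 / 2))) {w : ℝ} (hw : 0 < w) :
    Tendsto (fun x => S.indicator (fun θ => exp (-(x * φ θ))) (w / √x)) atTop
      (𝓝 (exp (-(1 / 2) * w ^ 2))) := by
  have hθ := tendsto_div_sqrt_atTop_nhdsGT_zero hw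
  have hexp := (continuous_exp.tendsto _).comp ((hlim.comp hθ).const_mul (w ^ 2)).neg
  rw [mul_comm, ← neg_mul] at hexp
  refine hexp.congr' ?_
  filter_upwards [hθ hS, eventually_gt_atTop 0] with x (hxS : w / √x ∈ S) hx
  rw [indicator_of_mem hxS]
  simp only [Function.comp_apply, div_pow, sq_sqrt hx.le]
  field_simp

lemma tendsto_sqrt_mul_laplaceIntegral (hφm : Measurable φ) (hSm : MeasurableSet S)
    (hS0 : S ⊆ Ioi 0) (hS : S ∈ 𝓝[>] 0) (hc : 0 < c) (hφ : ∀ θ ∈ S, c * θ ^ 2 ≤ φ θ)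
    (hlim : Tendsto (fun θ => φ θ / θ ^ 2) (𝓝[>] 0) (𝓝 (1 / 2))) :
    Tendsto (fun x => √x * laplaceIntegral φ S x) atTop (𝓝 (√(2 * π) / 2)) := by
  have hval : √(2 * π) / 2 = ∫ w in Ioi 0, exp (-(1 / 2) * w ^ 2) := by
    rw [integral_gaussian_Ioi]; congr 2; field_simp
  rw [hval]
  refine (tendsto_integral_filter_of_dominated_convergence (fun w => exp (-c * w ^ 2))
    (Eventually.of_forall fun x => ?_) ?_ (integrable_exp_neg_mul_sq hc).integrableOn
    ((ae_restrict_mem measurableSet_Ioi).mono fun w hw =>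
      tendsto_indicator_exp_neg_mul hS hlim hw)).congr' ?_
  · exact ((by fun_prop : Measurable fun θ => exp (-(x * φ θ))).indicator hSm).comp
      (by fun_prop) |>.aestronglyMeasurable
  · filter_upwards [eventually_gt_atTop 0] with x hx
    refine ae_of_all _ fun w => ?_
    rw [norm_of_nonneg (indicator_nonneg (fun _ _ => (exp_pos _).le) _)]
    exact indicator_exp_neg_mul_le hφ hx w
  · filter_upwards [eventually_gt_atTop 0] with x hx
    exact (sqrt_mul_laplaceIntegral_eq hSm hS0 hx).symm

end Laplace

noncomputable def scaledI0 (x : ℝ) : ℝ := √x * laplaceIntegral (fun θ => 1 - cos θ) (Ioc 0 π) x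

noncomputable def scaledK0 (y : ℝ) : ℝ := √y * laplaceIntegral (fun v => cosh v - 1) (Ioi 0) y

lemma I0_eq_scaledI0 {x : ℝ} (hx : 0 < x) : I0 x = exp x / (π * √x) * scaledI0 x := by
  have hexp : ∀ θ, exp (x * cos θ) = exp x * exp (-(x * (1 - cos θ))) := fun θ => by
    rw [← exp_add]; ring_nf
  rw [scaledI0, laplaceIntegral, I0, intervalIntegral.integral_of_le pi_pos.le]
  simp_rw [hexp, integral_const_mul]
  field_simp [(sqrt_pos.2 hx).ne']

lemma K0_eq_scaledK0 {y : ℝ} (hy : 0 < y) : K0 y = exp (-y) / √y * scaledK0 y := by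
  have hexp : ∀ v, exp (-y * cosh v) = exp (-y) * exp (-(y * (cosh v - 1))) := fun v => by
    rw [← exp_add]; ring_nf
  rw [scaledK0, laplaceIntegral, K0]
  simp_rw [hexp, integral_const_mul]
  field_simp [(sqrt_pos.2 hy).ne']

lemma scaledI0_nonneg (x : ℝ) : 0 ≤ scaledI0 x :=
  mul_nonneg (sqrt_nonneg x) (setIntegral_nonneg measurableSet_Ioc fun _ _ => (exp_pos _).le)

lemma scaledK0_nonneg (y : ℝ) : 0 ≤ scaledK0 y :=
  mul_nonneg (sqrt_nonneg y) (setIntegral_nonneg measurableSet_Ioi fun _ _ => (exp_pos _).le)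

@[fun_prop]
lemma measurable_scaledI0 : Measurable scaledI0 :=
  continuous_sqrt.measurable.mul (measurable_laplaceIntegral (by fun_prop) _)

@[fun_prop]
lemma measurable_scaledK0 : Measurable scaledK0 :=
  continuous_sqrt.measurable.mul (measurable_laplaceIntegral (by fun_prop) _)

lemma scaledI0_le {x : ℝ} (hx : 0 < x) : scaledI0 x ≤ √(π / (2 / π ^ 2)) / 2 :=
  sqrt_mul_laplaceIntegral_le measurableSet_Ioc (fun _ hθ => hθ.1) (by positivity)
    (fun _ => two_div_pi_sq_mul_sq_le_one_sub_cos) hx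

lemma scaledK0_le {y : ℝ} (hy : 0 < y) : scaledK0 y ≤ √(π / (1 / 2)) / 2 :=
  sqrt_mul_laplaceIntegral_le measurableSet_Ioi subset_rfl (by norm_num)
    (fun v _ => half_mul_sq_le_cosh_sub_one v) hy

lemma tendsto_scaledI0 : Tendsto scaledI0 atTop (𝓝 (√(2 * π) / 2)) :=
  tendsto_sqrt_mul_laplaceIntegral (by fun_prop) measurableSet_Ioc (fun _ hθ => hθ.1)
    (Ioc_mem_nhdsGT pi_pos) (by positivity) (fun _ => two_div_pi_sq_mul_sq_le_one_sub_cos)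
    (tendsto_one_sub_cos_div_sq.mono_left (nhdsGT_le_nhdsNE 0))

lemma tendsto_scaledK0 : Tendsto scaledK0 atTop (𝓝 (√(2 * π) / 2)) :=
  tendsto_sqrt_mul_laplaceIntegral (by fun_prop) measurableSet_Ioi subset_rfl
    self_mem_nhdsWithin (by norm_num) (fun v _ => half_mul_sq_le_cosh_sub_one v)
    (tendsto_cosh_sub_one_div_sq.mono_left (nhdsGT_le_nhdsNE 0))

lemma pow_mul_integral_Ioi_mul_pow (f : ℝ → ℝ) {c : ℝ} (hc : 0 < c) (n : ℕ) :
    c ^ n * ∫ t in Ioi 0, f t * t ^ n = ∫ s in Ioi 0, f (s / c) * s ^ n / c := by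
  have h := integral_comp_mul_left_Ioi (fun t => f t * t ^ n) 0 (inv_pos.2 hc)
  simp only [mul_zero, inv_inv, smul_eq_mul, ← div_eq_inv_mul] at h
  have hs : ∀ s, f (s / c) * s ^ n / c = c ^ n / c * (f (s / c) * (s / c) ^ n) := fun s => by
    rw [div_pow]; field_simp
  simp_rw [hs, integral_const_mul, h]
  field_simp

lemma integral_exp_neg_div_two_mul_pow (m : ℕ) :
    ∫ s in Ioi 0, exp (-(s / 2)) * s ^ m = 2 ^ (m + 1) * m.factorial := by
  have h := integral_rpow_mul_exp_neg_mul_Ioi (a := m + 1) (r := 1 / 2) (by positivity)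
    (by norm_num)
  rw [add_sub_cancel_right, Gamma_nat_eq_factorial, one_div_one_div, ← Nat.cast_add_one,
    rpow_natCast] at h
  simp only [rpow_natCast] at h
  rw [← h]
  refine setIntegral_congr_fun measurableSet_Ioi fun s _ => ?_
  ring_nf

lemma integrableOn_exp_neg_div_two_mul_pow (m : ℕ) :
    IntegrableOn (fun s => exp (-(s / 2)) * s ^ m) (Ioi 0) :=
  Integrable.of_integral_ne_zero (by rw [integral_exp_neg_div_two_mul_pow]; positivity)

noncomputable def rescaledIntegrand (m : ℕ) (a s : ℝ) : ℝ :=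
  exp (-(s / (1 + a))) / (π * √a) * scaledI0 (a * (s / (1 - a ^ 2)))
    * scaledK0 (s / (1 - a ^ 2)) * s ^ m

lemma I0_mul_K0_mul_pow_div_eq {a s : ℝ} (ha0 : 0 < a) (ha1 : a < 1) (hs : 0 < s) (m : ℕ) :
    I0 (a * (s / (1 - a ^ 2))) * K0 (s / (1 - a ^ 2)) * s ^ (m + 1) / (1 - a ^ 2)
      = rescaledIntegrand m a s := by
  have hc : 0 < 1 - a ^ 2 := by nlinarith
  set Y := s / (1 - a ^ 2) with hY
  have hY0 : 0 < Y := div_pos hs hc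
  have hexp : exp (a * Y) * exp (-Y) = exp (-(s / (1 + a))) := by
    rw [← exp_add, hY]; congr 1; field_simp; ring
  rw [rescaledIntegrand, I0_eq_scaledI0 (mul_pos ha0 hY0), K0_eq_scaledK0 hY0, sqrt_mul ha0.le,
    ← hexp]
  have hs' : s = Y * (1 - a ^ 2) := by rw [hY]; field_simp
  rw [hs']
  field_simp
  rw [sq_sqrt hY0.le]
  ring

lemma rescaledIntegrand_nonneg (m : ℕ) (a : ℝ) {s : ℝ} (hs : 0 ≤ s) :
    0 ≤ rescaledIntegrand m a s := by
  have := scaledI0_nonneg (a * (s / (1 - a ^ 2)))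
  have := scaledK0_nonneg (s / (1 - a ^ 2))
  unfold rescaledIntegrand
  positivity

lemma rescaledIntegrand_le (m : ℕ) {a s : ℝ} (ha : a ∈ Ioo (1 / 4) 1) (hs : 0 < s) :
    rescaledIntegrand m a s
      ≤ 2 / π * (√(π / (2 / π ^ 2)) / 2) * (√(π / (1 / 2)) / 2) * (exp (-(s / 2)) * s ^ m) := by
  have hY : 0 < s / (1 - a ^ 2) := div_pos hs (by nlinarith [ha.1, ha.2])
  have ha' : 1 / 2 ≤ √a := by
    rw [show (1 / 2 : ℝ) = √(1 / 4) by rw [sqrt_div' _ (by norm_num), sqrt_one,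
      show (4 : ℝ) = 2 ^ 2 by norm_num, sqrt_sq (by norm_num)]]
    exact sqrt_le_sqrt ha.1.le
  have hI := scaledI0_le (x := a * (s / (1 - a ^ 2))) (mul_pos (by linarith [ha.1]) hY)
  have hK := scaledK0_le hY
  calc rescaledIntegrand m a s
      ≤ exp (-(s / 2)) / (π * (1 / 2)) * (√(π / (2 / π ^ 2)) / 2) * (√(π / (1 / 2)) / 2)
          * s ^ m := by
        unfold rescaledIntegrand
        gcongr
        all_goals first
          | exact scaledK0_nonneg _ | exact scaledI0_nonneg _ | linarith [ha.1, ha.2]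
    _ = _ := by field_simp

lemma tendsto_one_sub_sq_nhdsLT_one : Tendsto (fun a : ℝ => 1 - a ^ 2) (𝓝[<] 1) (𝓝[>] 0) := by
  refine tendsto_nhdsWithin_iff.2 ⟨?_, ?_⟩
  · exact ((continuous_const.sub (continuous_pow 2)).tendsto' 1 0 (by norm_num)).mono_left
      nhdsWithin_le_nhds
  · filter_upwards [Ioo_mem_nhdsLT (show (0 : ℝ) < 1 by norm_num)] with a ha
    exact sub_pos.2 (pow_lt_one₀ ha.1.le ha.2 two_ne_zero)

lemma tendsto_rescaledIntegrand (m : ℕ) {s : ℝ} (hs : 0 < s) :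
    Tendsto (fun a => rescaledIntegrand m a s) (𝓝[<] 1) (𝓝 (exp (-(s / 2)) * s ^ m / 2)) := by
  have hY : Tendsto (fun a : ℝ => s / (1 - a ^ 2)) (𝓝[<] 1) atTop := by
    simpa only [div_eq_mul_inv, Function.comp_def] using
      (tendsto_inv_nhdsGT_zero.comp tendsto_one_sub_sq_nhdsLT_one).const_mul_atTop hs
  have haY := Tendsto.pos_mul_atTop one_pos (tendsto_nhdsWithin_of_tendsto_nhds tendsto_id) hY
  have hpre : Tendsto (fun a => exp (-(s / (1 + a))) / (π * √a)) (𝓝[<] 1)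
      (𝓝 (exp (-(s / 2)) / π)) := by
    have : ContinuousAt (fun a => exp (-(s / (1 + a))) / (π * √a)) 1 := by
      fun_prop (disch := norm_num [pi_ne_zero])
    simpa [one_add_one_eq_two] using this.tendsto.mono_left nhdsWithin_le_nhds
  have hval : exp (-(s / 2)) / π * (√(2 * π) / 2) * (√(2 * π) / 2) * s ^ m
      = exp (-(s / 2)) * s ^ m / 2 := by
    field_simp
    rw [sq_sqrt (by positivity)]
  rw [← hval]
  exact ((hpre.mul (tendsto_scaledI0.comp haY)).mul (tendsto_scaledK0.comp hY)).mul_const (s ^ m)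

lemma tendsto_integral_rescaledIntegrand (m : ℕ) :
    Tendsto (fun a => ∫ s in Ioi 0, rescaledIntegrand m a s) (𝓝[<] 1)
      (𝓝 (∫ s in Ioi 0, exp (-(s / 2)) * s ^ m / 2)) := by
  refine tendsto_integral_filter_of_dominated_convergence
    (fun s => 2 / π * (√(π / (2 / π ^ 2)) / 2) * (√(π / (1 / 2)) / 2) * (exp (-(s / 2)) * s ^ m))
    (Eventually.of_forall fun a => ?_) ?_ ((integrableOn_exp_neg_div_two_mul_pow m).const_mul _)
    ((ae_restrict_mem measurableSet_Ioi).mono fun s hs => tendsto_rescaledIntegrand m hs)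
  · exact Measurable.aestronglyMeasurable (by unfold rescaledIntegrand; fun_prop)
  · filter_upwards [Ioo_mem_nhdsLT (show (1 / 4 : ℝ) < 1 by norm_num)] with a ha
    filter_upwards [ae_restrict_mem measurableSet_Ioi] with s (hs : 0 < s)
    rw [norm_of_nonneg (rescaledIntegrand_nonneg m a hs.le)]
    exact rescaledIntegrand_le m ha hs

lemma tendsto_one_sub_sq_pow_mul_integral (m : ℕ) :
    Tendsto (fun a : ℝ => (1 - a ^ 2) ^ (m + 1) * ∫ t in Ioi 0, I0 (a * t) * K0 t * t ^ (m + 1))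
      (𝓝[<] 1) (𝓝 (2 ^ m * (m.factorial : ℝ))) := by
  have hval : ∫ s in Ioi 0, exp (-(s / 2)) * s ^ m / 2 = 2 ^ m * m.factorial := by
    rw [integral_div, integral_exp_neg_div_two_mul_pow, pow_succ]
    ring
  rw [← hval]
  refine (tendsto_integral_rescaledIntegrand m).congr' ?_
  filter_upwards [Ioo_mem_nhdsLT (show (0 : ℝ) < 1 by norm_num)] with a ha
  rw [pow_mul_integral_Ioi_mul_pow (fun t => I0 (a * t) * K0 t) (by nlinarith [ha.1, ha.2])]
  exact setIntegral_congr_fun measurableSet_Ioi fun s hs =>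
    (I0_mul_K0_mul_pow_div_eq ha.1 ha.2 hs m).symm

lemma tendsto_sqrt_nhdsLT_one : Tendsto sqrt (𝓝[<] 1) (𝓝[<] 1) :=
  tendsto_nhdsWithin_iff.2
    ⟨by simpa using (continuous_sqrt.tendsto 1).mono_left nhdsWithin_le_nhds,
      by filter_upwards [self_mem_nhdsWithin] with u (hu : u < 1)
         exact (sqrt_lt' one_pos).2 (by simpa using hu)⟩

theorem weber_schafheitlin_asymptotics (n : ℕ) (hn : 0 < n) :
    Filter.Tendsto
      (fun u : ℝ => (1 - u)^n * ∫ t in Set.Ioi (0:ℝ), I0 (Real.sqrt u * t) * K0 t * t^n)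
      (nhdsWithin 1 (Set.Iio 1))
      (nhds ((2:ℝ)^(n-1) * Nat.factorial (n-1))) := by
  obtain ⟨m, rfl⟩ := Nat.exists_eq_add_one_of_ne_zero hn.ne'
  rw [Nat.add_sub_cancel]
  refine ((tendsto_one_sub_sq_pow_mul_integral m).comp tendsto_sqrt_nhdsLT_one).congr' ?_
  filter_upwards [Ioo_mem_nhdsLT (show (0 : ℝ) < 1 by norm_num)] with u hu
  simp [sq_sqrt hu.1.le]
end

section
/- Define det M_k = det of the k×k matrix with entries (M_k)_{a,b} = ∫_0^∞ [I_0(t)]^a [K_0(t)]^{2k+1−a} t^{2b−1} dt. Then the claimed closed forms det M_k = ∏_{j=1}^k (2j)^{k−j} π^j / √((2j+1)^{2j+1}) and det N_k = (2π^{(k+1)²/2}/Γ((k+1)/2))·∏_{j=1}^{k+1} (2j−1)^{k+1−j}/(2j)^j, with (N_k)_{a,b} = ∫_0^∞ [I_0(t)]^a [K_0(t)]^{2k+2−a} t^{2b−1} dt, are consistent with the recursion det M_{k−1}·det M_k = [k·(Γ(k/2))²·(det N_{k−1})²/(2(2k+1))]·∏_{j=1}^k [(2j)²/((2j)²−1)]^{k−1/2}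 for all k ≥ 2. That is, substituting the closed forms into both sides of the recursion yields a valid identity of real numbers. -/
open Real

/-- Closed form for the Broadhurst–Mellit determinant `det M_k`. -/
noncomputable def detM (k : ℕ) : ℝ :=
  ∏ j ∈ Finset.Icc 1 k, ((2*j:ℝ)^(k-j) * π^j / Real.sqrt (((2*j+1:ℕ):ℝ)^(2*j+1)))

/-- Closed form for the Broadhurst–Mellit determinant `det N_k`. -/
noncomputable def detN (k : ℕ) : ℝ :=
  2 * π ^ ((((k+1)^2 : ℕ):ℝ)/2) / Real.Gamma (((k:ℝ)+1)/2) *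
    ∏ j ∈ Finset.Icc 1 (k+1), ((2*(j:ℝ)-1)^(k+1-j) / (2*j:ℝ)^j)

/-!
Squaring both sides removes the square roots in `detM` and the half-integer powers `k - 1/2`,
and `Γ(k/2)²` cancels against the `Γ` in `detN (k - 1)`. Since `∏ (2j)² / ((2j)² - 1)` equals
`(∏ 2j)² / ((∏ (2j - 1))² (2k + 1))`, what remains is an identity between products of natural
powers, and it goes by induction on `k`: passing from `k` to `k + 1` multiplies every product
`∏ f(j) ^ (k - j)` by the plain product `∏ f(j)`.
-/

open Finset

theorem prod_Icc_pow_sub_mul_succ {M : Type*} [CommMonoid M] (f g : ℕ → M) (k : ℕ) :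
    ∏ j ∈ Icc 1 (k + 1), f j ^ (k + 1 - j) * g j
      = (∏ j ∈ Icc 1 k, f j ^ (k - j) * g j) * (∏ j ∈ Icc 1 k, f j) * g (k + 1) := by
  rw [prod_Icc_succ_top (by omega), Nat.sub_self, pow_zero, one_mul, ← prod_mul_distrib]
  congr 1
  refine prod_congr rfl fun j hj => ?_
  rw [show k + 1 - j = k - j + 1 by grind, pow_succ, mul_right_comm]

noncomputable def evenProd (k : ℕ) : ℝ := ∏ j ∈ Icc 1 k, (2 * (j : ℝ))

noncomputable def oddProd (k : ℕ) : ℝ := ∏ j ∈ Icc 1 k, (2 * (j : ℝ) - 1)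

/-- `detN (k - 1) = 2 * π ^ (k ^ 2 / 2) / Γ (k / 2) * detNProd k` by definition. -/
noncomputable def detNProd (k : ℕ) : ℝ := ∏ j ∈ Icc 1 k, ((2 * (j : ℝ) - 1) ^ (k - j) / (2 * j : ℝ) ^ j)

theorem evenProd_succ (k : ℕ) : evenProd (k + 1) = evenProd k * (2 * k + 2) := by
  unfold evenProd
  rw [prod_Icc_succ_top (by omega)]
  push_cast
  ring

theorem oddProd_succ (k : ℕ) : oddProd (k + 1) = oddProd k * (2 * k + 1) := by
  unfold oddProd
  rw [prod_Icc_succ_top (by omega)]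
  push_cast
  ring

theorem oddProd_pos (k : ℕ) : 0 < oddProd k :=
  prod_pos fun j hj => by
    have : (1 : ℝ) ≤ j := by exact_mod_cast (mem_Icc.mp hj).1
    linarith

theorem wallis_prod_eq (k : ℕ) :
    ∏ j ∈ Icc 1 k, (2 * (j : ℝ)) ^ 2 / ((2 * (j : ℝ)) ^ 2 - 1)
      = evenProd k ^ 2 / (oddProd k ^ 2 * (2 * k + 1)) := by
  induction k with
  | zero => simp [evenProd, oddProd]
  | succ k ih =>
    rw [prod_Icc_succ_top (by omega), ih, evenProd_succ, oddProd_succ]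
    have := oddProd_pos k
    push_cast
    rw [show (2 * ((k : ℝ) + 1)) ^ 2 - 1 = (2 * k + 1) * (2 * k + 3) by ring]
    field_simp
    ring

theorem detM_succ_sq (k : ℕ) :
    detM (k + 1) ^ 2 = detM k ^ 2 * evenProd k ^ 2 * π ^ (2 * k + 2) / (2 * k + 3) ^ (2 * k + 3) := by
  have hrec : detM (k + 1) = detM k * evenProd k * (π ^ (k + 1) /
      √(((2 * (k + 1) + 1 : ℕ) : ℝ) ^ (2 * (k + 1) + 1))) := by
    simp only [detM, evenProd, mul_div_assoc]
    exact prod_Icc_pow_sub_mul_succ _ _ k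
  rw [hrec, mul_pow, div_pow, sq_sqrt (by positivity)]
  push_cast
  ring

theorem detNProd_succ (k : ℕ) :
    detNProd (k + 1) = detNProd k * oddProd k / (2 * k + 2) ^ (k + 1) := by
  simp only [detNProd, oddProd, div_eq_mul_inv]
  rw [prod_Icc_pow_sub_mul_succ]
  push_cast
  ring

theorem detM_mul_detM_succ_sq (m : ℕ) :
    (detM m * detM (m + 1)) ^ 2
      = (2 * m + 2) ^ 2 * π ^ (2 * (m + 1) ^ 2) * detNProd (m + 1) ^ 4
          * (evenProd (m + 1) ^ 2 / (oddProd (m + 1) ^ 2 * (2 * m + 3))) ^ (2 * m + 1)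
          / (2 * m + 3) ^ 2 := by
  induction m with
  | zero =>
    simp only [mul_pow, detM_succ_sq, detNProd_succ, evenProd_succ, oddProd_succ]
    norm_num [detM, detNProd, evenProd, oddProd]
    ring
  | succ m ih =>
    have hstep : (detM (m + 1) * detM (m + 2)) ^ 2 = (detM m * detM (m + 1)) ^ 2
        * (evenProd m ^ 2 * π ^ (2 * m + 2) / (2 * m + 3) ^ (2 * m + 3))
        * (evenProd (m + 1) ^ 2 * π ^ (2 * m + 4) / (2 * m + 5) ^ (2 * m + 5)) := by
      rw [mul_pow, mul_pow, detM_succ_sq (m + 1), detM_succ_sq m]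
      push_cast
      ring
    rw [hstep, ih, detNProd_succ (m + 1), evenProd_succ (m + 1), evenProd_succ m,
      oddProd_succ (m + 1)]
    have := oddProd_pos (m + 1)
    push_cast
    simp only [div_pow, mul_pow, ← pow_mul]
    field_simp
    ring

theorem rpow_sq_of_two_mul_eq {x y : ℝ} {n : ℕ} (hx : 0 ≤ x) (h : 2 * y = n) :
    (x ^ y) ^ 2 = x ^ n := by
  rw [← rpow_mul_natCast hx, ← rpow_natCast]
  congr 1
  push_cast
  linarith

theorem detM_mul_detM_succ (m : ℕ) :
    detM m * detM (m + 1)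
      = (2 * m + 2) * π ^ ((m + 1) ^ 2) * detNProd (m + 1) ^ 2
          * (evenProd (m + 1) ^ 2 / (oddProd (m + 1) ^ 2 * (2 * m + 3))) ^ ((m : ℝ) + 1 / 2)
          / (2 * m + 3) := by
  have hdetM (k : ℕ) : 0 ≤ detM k := by unfold detM; positivity
  have hwallis := rpow_sq_of_two_mul_eq (n := 2 * m + 1)
    (by positivity : 0 ≤ evenProd (m + 1) ^ 2 / (oddProd (m + 1) ^ 2 * (2 * m + 3)))
    (y := (m : ℝ) + 1 / 2) (by push_cast; ring)
  rw [← sq_eq_sq₀ (mul_nonneg (hdetM m) (hdetM (m + 1))) (by positivity),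
    detM_mul_detM_succ_sq, ← hwallis]
  field_simp
  ring

theorem Gamma_sq_mul_detN_sq (m : ℕ) :
    Gamma (((m : ℝ) + 1) / 2) ^ 2 * detN m ^ 2 = 4 * π ^ ((m + 1) ^ 2) * detNProd (m + 1) ^ 2 := by
  have hΓ : Gamma (((m : ℝ) + 1) / 2) ≠ 0 := (Gamma_pos_of_pos (by positivity)).ne'
  change _ * (_ * detNProd (m + 1)) ^ 2 = _
  rw [mul_pow, div_pow, mul_pow, rpow_sq_of_two_mul_eq pi_pos.le (by ring)]
  field_simp
  ring

theorem detM_recursion_consistency (k : ℕ) (hk : 2 ≤ k) :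
    detM (k-1) * detM k
      = (k:ℝ) * (Real.Gamma ((k:ℝ)/2))^2 * (detN (k-1))^2 / (2 * (2*(k:ℝ)+1)) *
          ∏ j ∈ Finset.Icc 1 k, ((2*(j:ℝ))^2 / ((2*(j:ℝ))^2 - 1)) ^ ((k:ℝ) - 1/2) := by
  obtain ⟨m, rfl⟩ : ∃ m, k = m + 1 := ⟨k - 1, by omega⟩
  have hfactor : ∀ j ∈ Icc 1 (m + 1), 0 ≤ (2 * (j : ℝ)) ^ 2 / ((2 * (j : ℝ)) ^ 2 - 1) := by
    intro j hj
    have : (1 : ℝ) ≤ j := by exact_mod_cast (mem_Icc.mp hj).1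
    exact div_nonneg (by positivity) (by nlinarith)
  rw [Real.finsetProd_rpow _ _ hfactor, wallis_prod_eq, Nat.add_sub_cancel,
    detM_mul_detM_succ]
  push_cast
  rw [show (m : ℝ) + 1 - 1 / 2 = m + 1 / 2 by ring, show 2 * ((m : ℝ) + 1) + 1 = 2 * m + 3 by ring,
    mul_assoc _ (Gamma _ ^ 2), Gamma_sq_mul_detN_sq]
  field_simp
  ring
end

section
/- Define det N_k and det M_k by the product formulas det M_k = ∏_{j=1}^k (2j)^{k−j} π^j / √((2j+1)^{2j+1}) and det N_k = (2π^{(k+1)²/2}/Γ((k+1)/2))·∏_{j=1}^{k+1} (2j−1)^{k+1−j}/(2j)^j. Then for every integer k ≥ 2, det N_{k−1}·det N_k = [(2k+1)/(k+1)]·[(det M_k)²/(k−1)!]·∏_{j=2}^{k+1} [(2j−1)²/((2j−1)²−1)]^k. -/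
open Real

/-!
Legendre's duplication formula gives `Γ(k/2) Γ((k+1)/2) = (k-1)! √π / 2^(k-1)`, and the two
half-integral powers of `π` in `det N_{k-1} det N_k` combine to `π^(k(k+1)) √π`; so both sides
carry the factor `π^(k(k+1)) / (k-1)!` and what remains is an identity between products of
integers.
Its even part cancels because `∏ (2j)^j * ∏ (2j)^(k-j) = (∏ 2j)^k`; its odd part is
`A_k A_{k+1} D_k = (2k+1) (1·3⋯(2k+1))^(2k)` with `A_k = ∏ (2j-1)^(k-j)` and
`D_k = ∏ (2j+1)^(2j+1)`, which follows by induction on `k` from `A_{k+1} = A_k · 1·3⋯(2k-1)`.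
-/

open Finset
open scoped Nat

namespace BroadhurstMellit

section Products

variable {M : Type*} [CommMonoid M]

theorem prod_pow_sub_mul_prod_pow (f : ℕ → M) {s : Finset ℕ} {k : ℕ}
    (hs : ∀ j ∈ s, j ≤ k) :
    (∏ j ∈ s, f j ^ (k - j)) * ∏ j ∈ s, f j ^ j = (∏ j ∈ s, f j) ^ k := by
  rw [← prod_mul_distrib, ← prod_pow]
  exact prod_congr rfl fun j hj => by rw [← pow_add, Nat.sub_add_cancel (hs j hj)]

theorem prod_Icc_pow_sub_succ (f : ℕ → M) (k : ℕ) :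
    ∏ j ∈ Icc 1 (k + 1), f j ^ (k + 1 - j) =
      (∏ j ∈ Icc 1 k, f j ^ (k - j)) * ∏ j ∈ Icc 1 k, f j := by
  rw [prod_Icc_succ_top (by omega), Nat.sub_self, pow_zero, mul_one, ← prod_mul_distrib]
  refine prod_congr rfl fun j hj => ?_
  rw [Nat.sub_add_comm (mem_Icc.mp hj).2, pow_succ]

end Products

noncomputable def oddProd (k : ℕ) : ℝ := ∏ j ∈ Icc 1 k, (2 * (j : ℝ) - 1)

noncomputable def evenProd (k : ℕ) : ℝ := ∏ j ∈ Icc 1 k, (2 * (j : ℝ))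

noncomputable def oddPowProd (k : ℕ) : ℝ := ∏ j ∈ Icc 1 k, (2 * (j : ℝ) - 1) ^ (k - j)

noncomputable def evenPowProd (k : ℕ) : ℝ := ∏ j ∈ Icc 1 k, (2 * (j : ℝ)) ^ j

noncomputable def oddSelfPowProd (k : ℕ) : ℝ :=
  ∏ j ∈ Icc 1 k, ((2 * j + 1 : ℕ) : ℝ) ^ (2 * j + 1)

theorem oddProd_succ (k : ℕ) : oddProd (k + 1) = oddProd k * (2 * k + 1) := by
  unfold oddProd; rw [prod_Icc_succ_top (by omega)]; push_cast; ring

theorem evenProd_succ (k : ℕ) : evenProd (k + 1) = evenProd k * (2 * (k + 1)) := by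
  unfold evenProd; rw [prod_Icc_succ_top (by omega)]; push_cast; ring

theorem oddPowProd_succ (k : ℕ) : oddPowProd (k + 1) = oddPowProd k * oddProd k :=
  prod_Icc_pow_sub_succ _ k

theorem evenPowProd_succ (k : ℕ) :
    evenPowProd (k + 1) = evenPowProd k * (2 * (k + 1)) ^ (k + 1) := by
  unfold evenPowProd; rw [prod_Icc_succ_top (by omega)]; push_cast; ring

theorem oddSelfPowProd_succ (k : ℕ) :
    oddSelfPowProd (k + 1) = oddSelfPowProd k * (2 * k + 3) ^ (2 * k + 3) := by
  unfold oddSelfPowProd; rw [prod_Icc_succ_top (by omega)]; push_cast; ring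

theorem oddPowProd_mul_oddPowProd_succ_mul_oddSelfPowProd (k : ℕ) :
    oddPowProd k * oddPowProd (k + 1) * oddSelfPowProd k =
      (2 * k + 1) * oddProd (k + 1) ^ (2 * k) := by
  induction k with
  | zero => simp [oddPowProd, oddSelfPowProd, oddProd]
  | succ k ih =>
    simp only [oddPowProd_succ, oddProd_succ, oddSelfPowProd_succ, mul_pow] at ih ⊢
    push_cast
    linear_combination (oddProd k ^ 2 * (2 * k + 1) * (2 * (k : ℝ) + 3) ^ (2 * k + 3)) * ih

theorem prod_Icc_two_odd_sq (k : ℕ) :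
    ∏ j ∈ Icc 2 (k + 1), (2 * (j : ℝ) - 1) ^ 2 = oddProd (k + 1) ^ 2 := by
  induction k with
  | zero => norm_num [oddProd]
  | succ k ih =>
    rw [prod_Icc_succ_top (by omega), ih, oddProd_succ (k + 1)]; push_cast; ring

theorem prod_Icc_two_odd_sq_sub_one (k : ℕ) :
    ∏ j ∈ Icc 2 (k + 1), ((2 * (j : ℝ) - 1) ^ 2 - 1) = evenProd k ^ 2 * (k + 1) := by
  induction k with
  | zero => simp [evenProd]
  | succ k ih =>
    rw [prod_Icc_succ_top (by omega), ih, evenProd_succ]; push_cast; ring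

theorem evenProd_pos (k : ℕ) : 0 < evenProd k :=
  prod_pos fun j hj => by have : (1 : ℝ) ≤ j := mod_cast (mem_Icc.mp hj).1; positivity

theorem evenPowProd_pos (k : ℕ) : 0 < evenPowProd k :=
  prod_pos fun j hj => by have : (1 : ℝ) ≤ j := mod_cast (mem_Icc.mp hj).1; positivity

theorem oddSelfPowProd_pos (k : ℕ) : 0 < oddSelfPowProd k :=
  prod_pos fun _ _ => by positivity

theorem sum_Icc_two_mul (k : ℕ) : ∑ j ∈ Icc 1 k, 2 * j = k * (k + 1) := by
  induction k with
  | zero => rfl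
  | succ k ih => rw [sum_Icc_succ_top (by omega), ih]; ring

theorem detM_sq (k : ℕ) :
    detM k ^ 2 =
      evenProd k ^ (2 * k) * π ^ (k * (k + 1)) / (evenPowProd k ^ 2 * oddSelfPowProd k) := by
  have hcopow : (∏ j ∈ Icc 1 k, (2 * (j : ℝ)) ^ (k - j)) * evenPowProd k = evenProd k ^ k :=
    prod_pow_sub_mul_prod_pow _ fun j hj => (mem_Icc.mp hj).2
  have hfactor : ∀ j ∈ Icc 1 k,
      ((2 * j : ℝ) ^ (k - j) * π ^ j / √(((2 * j + 1 : ℕ) : ℝ) ^ (2 * j + 1))) ^ 2 =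
        ((2 * (j : ℝ)) ^ (k - j)) ^ 2 * π ^ (2 * j) /
          ((2 * j + 1 : ℕ) : ℝ) ^ (2 * j + 1) := by
    intro j _
    rw [div_pow, sq_sqrt (by positivity)]; ring
  rw [detM, ← prod_pow, prod_congr rfl hfactor, prod_div_distrib, prod_mul_distrib, prod_pow,
    prod_pow_eq_pow_sum, sum_Icc_two_mul, ← oddSelfPowProd, pow_mul' (evenProd k) 2 k, ← hcopow]
  have hB := (evenPowProd_pos k).ne'
  field_simp

theorem Gamma_mul_Gamma_half_succ (n : ℕ) :
    Gamma (((n : ℝ) + 1) / 2) * Gamma ((((n + 1 : ℕ) : ℝ) + 1) / 2) =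
      n ! * √π / 2 ^ n := by
  have h := Gamma_mul_Gamma_add_half (((n : ℝ) + 1) / 2)
  rw [show ((n : ℝ) + 1) / 2 + 1 / 2 = (((n + 1 : ℕ) : ℝ) + 1) / 2 by push_cast; ring,
    show 2 * (((n : ℝ) + 1) / 2) = n + 1 by ring, Gamma_nat_eq_factorial,
    show (1 : ℝ) - (n + 1) = -n by ring, rpow_neg zero_le_two, rpow_natCast] at h
  rw [h]; ring

theorem rpow_sq_half_mul_rpow_succ_sq_half {x : ℝ} (hx : 0 < x) (m : ℕ) :
    x ^ (((m ^ 2 : ℕ) : ℝ) / 2) * x ^ ((((m + 1) ^ 2 : ℕ) : ℝ) / 2) =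
      x ^ (m * (m + 1)) * √x := by
  rw [sqrt_eq_rpow, ← rpow_natCast, ← rpow_add hx, ← rpow_add hx]
  congr 1
  push_cast
  ring

theorem detN_eq (n : ℕ) :
    detN n = 2 * π ^ ((((n + 1) ^ 2 : ℕ) : ℝ) / 2) / Gamma (((n : ℝ) + 1) / 2) *
      (oddPowProd (n + 1) / evenPowProd (n + 1)) := by
  rw [detN, prod_div_distrib, oddPowProd, evenPowProd]

theorem detN_mul_detN_succ_eq_powProd (n : ℕ) :
    detN n * detN (n + 1) = 2 ^ (n + 2) * π ^ ((n + 1) * (n + 2)) / n ! *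
      (oddPowProd (n + 1) * oddPowProd (n + 2) /
        (evenPowProd (n + 1) * evenPowProd (n + 2))) := by
  have hGamma := Gamma_mul_Gamma_half_succ n
  have hpi := rpow_sq_half_mul_rpow_succ_sq_half pi_pos (n + 1)
  rw [detN_eq, detN_eq]
  calc _ = 4 * (π ^ ((((n + 1) ^ 2 : ℕ) : ℝ) / 2) *
            π ^ ((((n + 1 + 1) ^ 2 : ℕ) : ℝ) / 2)) /
          (Gamma (((n : ℝ) + 1) / 2) * Gamma ((((n + 1 : ℕ) : ℝ) + 1) / 2)) *
          (oddPowProd (n + 1) * oddPowProd (n + 2) /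
            (evenPowProd (n + 1) * evenPowProd (n + 2))) := by
        ring
    _ = _ := by
      rw [hpi, hGamma]
      field_simp
      ring

theorem detN_mul_detN_succ (n : ℕ) :
    detN n * detN (n + 1)
      = ((2 * ((n + 1 : ℕ) : ℝ) + 1) / (((n + 1 : ℕ) : ℝ) + 1)) *
          ((detM (n + 1)) ^ 2 / n !) *
          ∏ j ∈ Icc 2 (n + 1 + 1),
            ((2 * (j : ℝ) - 1) ^ 2 / ((2 * (j : ℝ) - 1) ^ 2 - 1)) ^ (n + 1) := by
  have hodd := oddPowProd_mul_oddPowProd_succ_mul_oddSelfPowProd (n + 1)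
  rw [detN_mul_detN_succ_eq_powProd, detM_sq, prod_pow, prod_div_distrib, prod_Icc_two_odd_sq,
    prod_Icc_two_odd_sq_sub_one, evenPowProd_succ (n + 1), div_pow, mul_pow]
  have hB := (evenPowProd_pos (n + 1)).ne'
  have hD := (oddSelfPowProd_pos (n + 1)).ne'
  have hE := (evenProd_pos (n + 1)).ne'
  field_simp
  push_cast at hodd ⊢
  simp only [mul_pow]
  linear_combination ((n + 2 : ℝ) ^ (n + 2) * evenProd (n + 1) ^ (2 * (n + 1))) * hodd

end BroadhurstMellit

theorem detN_recursion_consistency (k : ℕ) (hk : 2 ≤ k) :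
    detN (k-1) * detN k
      = ((2*(k:ℝ)+1)/((k:ℝ)+1)) * ((detM k)^2 / (Nat.factorial (k-1))) *
          ∏ j ∈ Finset.Icc 2 (k+1), ((2*(j:ℝ)-1)^2 / ((2*(j:ℝ)-1)^2 - 1)) ^ k := by
  obtain ⟨n, rfl⟩ : ∃ n, k = n + 1 := ⟨k - 1, by omega⟩
  exact BroadhurstMellit.detN_mul_detN_succ n
end
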